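/- Let Q_q, Q_p, P_q, P_p, Q_t, P_t, and row vectors W_q, W_p be as in Proposition on canonical coordinates. The Jacobian block matrix Z_z = [[Q_q, Q_t, Q_p, 0],[0,1,0,0],[P_q, P_t, P_p, 0],[W_q, W_t, W_p, 1]] satisfies Z_zᵀ J̃ Z_z = J̃ (with J̃ the symplectic matrix for ordering (q,t,p,u)) if and only if Y_yᵀ J_n Y_y = J_n and [W_q W_p] = −Y_tᵀ J_n Y_y, where Y_y = [[Q_q, Q_p],[P_q, P_p]] and Y_t = [Q_t; P_t]. -/

import Mathlib

/-!
Regroup the coordinates `(q, t, p, u)` as `((q, p), (t, u))`. Then `J̃` becomes the block-diagonal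
`diag(Jₙ, J₁)` and `Z_z` becomes `[[Y_y, (Y_t 0)], [(0; W), [[1, 0], [W_t, 1]]]]`, with
`W = [W_q W_p]`. Multiplying out, the `y`-block of `Z_zᵀ J̃ Z_z` is `Y_yᵀ Jₙ Y_y`, the two
off-diagonal blocks are `Y_tᵀ Jₙ Y_y + W` and minus its transpose, and the `(t, u)`-block is
`J₁` except for its `(t, t)` entry `Y_tᵀ Jₙ Y_t + W_t - W_t`, which vanishes because a `1 × 1`
matrix is symmetric while `Jₙ` is antisymmetric.
-/

open Matrix

/-- Standard symplectic matrix `J_n = [[0, Iₙ], [-Iₙ, 0]]`. -/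
def Jmat (n : ℕ) : Matrix (Fin n ⊕ Fin n) (Fin n ⊕ Fin n) ℝ :=
  Matrix.fromBlocks 0 1 (-1) 0

/-- The symplectic matrix of the 2-form `dp∧dq + du∧dt` on `ℝ^{2n+2}` in the coordinate
ordering `(q, t, p, u)`. -/
def Jext (n : ℕ) : Matrix ((Fin n ⊕ Fin 1) ⊕ (Fin n ⊕ Fin 1))
    ((Fin n ⊕ Fin 1) ⊕ (Fin n ⊕ Fin 1)) ℝ :=
  Matrix.fromBlocks 0 1 (-1) 0

namespace Matrix

section Partitioned

variable {R m n m₁ m₂ n₁ n₂ : Type*} [Add R]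

theorem fromCols_add (A₁ B₁ : Matrix m n₁ R) (A₂ B₂ : Matrix m n₂ R) :
    fromCols A₁ A₂ + fromCols B₁ B₂ = fromCols (A₁ + B₁) (A₂ + B₂) := by
  ext i (j | j) <;> rfl

theorem fromRows_add (A₁ B₁ : Matrix m₁ n R) (A₂ B₂ : Matrix m₂ n R) :
    fromRows A₁ A₂ + fromRows B₁ B₂ = fromRows (A₁ + B₁) (A₂ + B₂) := by
  ext (i | i) j <;> rfl

end Partitioned

theorem transpose_eq_self_of_subsingleton {R κ : Type*} [Subsingleton κ] (c : Matrix κ κ R) :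
    cᵀ = c := by
  ext i j
  rw [Subsingleton.elim i j, transpose_apply]

theorem reindex_transpose_mul_mul {R m n : Type*} [CommRing R] [Fintype m] [Fintype n]
    (e : m ≃ n) (M J : Matrix m m R) :
    (reindex e e M)ᵀ * reindex e e J * reindex e e M = reindex e e (Mᵀ * J * M) := by
  simp

theorem fromBlocks_transpose_mul_fromBlocks_mul {R m n : Type*} [CommRing R]
    [Fintype m] [Fintype n] (A : Matrix m m R) (B : Matrix m n R) (C : Matrix n m R)
    (D : Matrix n n R) (J : Matrix m m R) (K : Matrix n n R) :
    (fromBlocks A B C D)ᵀ * fromBlocks J 0 0 K * fromBlocks A B C D =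
      fromBlocks (Aᵀ * J * A + Cᵀ * K * C) (Aᵀ * J * B + Cᵀ * K * D)
        (Bᵀ * J * A + Dᵀ * K * C) (Bᵀ * J * B + Dᵀ * K * D) := by
  simp [fromBlocks_transpose, fromBlocks_multiply, Matrix.mul_assoc]

theorem transpose_mul_mul_self_eq_zero_of_subsingleton {R ι κ : Type*} [CommRing R]
    [NoZeroDivisors R] [CharZero R] [Fintype ι] [Subsingleton κ] {J : Matrix ι ι R} (hJ : Jᵀ = -J)
    (b : Matrix ι κ R) : bᵀ * J * b = 0 := by
  have h : bᵀ * J * b = -(bᵀ * J * b) := by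
    conv_lhs => rw [← transpose_eq_self_of_subsingleton (bᵀ * J * b)]
    simp only [transpose_mul, transpose_transpose, hJ, Matrix.mul_neg, Matrix.neg_mul,
      Matrix.mul_assoc]
  ext i j
  exact CharZero.eq_neg_self_iff.mp (congrFun (congrFun h i) j)

section ExtendedJacobian

variable {R ι : Type*} (κ : Type*) [CommRing R] [DecidableEq κ]

def extendedForm (J : Matrix ι ι R) : Matrix (ι ⊕ (κ ⊕ κ)) (ι ⊕ (κ ⊕ κ)) R :=
  fromBlocks J 0 0 (fromBlocks 0 1 (-1) 0)

variable {κ}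

def extendedJacobian (A : Matrix ι ι R) (b : Matrix ι κ R) (w : Matrix κ ι R)
    (c : Matrix κ κ R) : Matrix (ι ⊕ (κ ⊕ κ)) (ι ⊕ (κ ⊕ κ)) R :=
  fromBlocks A (fromCols b 0) (fromRows 0 w) (fromBlocks 1 0 c 1)

variable [Fintype ι] [Fintype κ] (J A : Matrix ι ι R) (b : Matrix ι κ R) (w : Matrix κ ι R)
  (c : Matrix κ κ R)

theorem extendedJacobian_transpose_mul_extendedForm_mul :
    (extendedJacobian A b w c)ᵀ * extendedForm κ J * extendedJacobian A b w c =
      fromBlocks (Aᵀ * J * A) (fromCols (Aᵀ * J * b - wᵀ) 0) (fromRows (bᵀ * J * A + w) 0)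
        (fromBlocks (bᵀ * J * b + (c - cᵀ)) 1 (-1) 0) := by
  rw [extendedJacobian, extendedForm, fromBlocks_transpose_mul_fromBlocks_mul]
  simp [transpose_fromCols, transpose_fromRows, fromRows_mul, mul_fromCols, fromCols_mul_fromRows,
    fromCols_add, fromRows_add, ← fromCols_fromRows_eq_fromBlocks, ← sub_eq_add_neg,
    neg_add_eq_sub]

variable {J}

theorem extendedJacobian_symplectic_iff (hJ : Jᵀ = -J) :
    (extendedJacobian A b w c)ᵀ * extendedForm κ J * extendedJacobian A b w c =
        extendedForm κ J ↔
      Aᵀ * J * A = J ∧ w = -(bᵀ * J * A) ∧ bᵀ * J * b + (c - cᵀ) = 0 := by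
  have hform : extendedForm κ J = fromBlocks J (fromCols 0 0) (fromRows 0 0)
      (fromBlocks (0 : Matrix κ κ R) 1 (-1) 0) := by
    rw [fromCols_zero, fromRows_zero, extendedForm]
  have hskew : Aᵀ * J * b - wᵀ = -(bᵀ * J * A + w)ᵀ := by
    simp only [transpose_add, transpose_mul, transpose_transpose, hJ, Matrix.mul_assoc,
      Matrix.neg_mul, Matrix.mul_neg, neg_add, neg_neg, sub_eq_add_neg]
  rw [extendedJacobian_transpose_mul_extendedForm_mul, hform]
  simp only [fromBlocks_inj, fromCols_inj.eq_iff, fromRows_inj.eq_iff, and_true, hskew,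
    neg_eq_zero, transpose_eq_zero, eq_neg_iff_add_eq_zero, add_comm w]
  tauto

theorem extendedJacobian_symplectic_iff_of_subsingleton [NoZeroDivisors R] [CharZero R]
    [Subsingleton κ] (hJ : Jᵀ = -J) :
    (extendedJacobian A b w c)ᵀ * extendedForm κ J * extendedJacobian A b w c =
        extendedForm κ J ↔
      Aᵀ * J * A = J ∧ w = -(bᵀ * J * A) := by
  simp [extendedJacobian_symplectic_iff A b w c hJ,
    transpose_mul_mul_self_eq_zero_of_subsingleton hJ, transpose_eq_self_of_subsingleton c]

end ExtendedJacobian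

end Matrix

theorem Jmat_transpose (n : ℕ) : (Jmat n)ᵀ = -Jmat n := by
  simp [Jmat, fromBlocks_transpose, fromBlocks_neg]

theorem reindex_Jext (n : ℕ) :
    reindex (Equiv.sumSumSumComm _ _ _ _) (Equiv.sumSumSumComm _ _ _ _) (Jext n) =
      extendedForm (Fin 1) (Jmat n) := by
  ext ((i | i) | (i | i)) ((j | j) | (j | j)) <;> simp [Jext, Jmat, extendedForm, one_apply]

theorem reindex_jacobian (n : ℕ) (Qq Qp Pq Pp : Matrix (Fin n) (Fin n) ℝ)
    (Qt Pt Wq Wp : Fin n → ℝ) (Wt : ℝ) :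
    reindex (Equiv.sumSumSumComm _ _ _ _) (Equiv.sumSumSumComm _ _ _ _)
      (fromBlocks (fromBlocks Qq (of fun i _ => Qt i) 0 1) (fromBlocks Qp 0 0 0)
        (fromBlocks Pq (of fun i _ => Pt i) (of fun _ j => Wq j) (of fun _ _ => Wt))
        (fromBlocks Pp 0 (of fun _ j => Wp j) 1) :
        Matrix ((Fin n ⊕ Fin 1) ⊕ (Fin n ⊕ Fin 1))
          ((Fin n ⊕ Fin 1) ⊕ (Fin n ⊕ Fin 1)) ℝ) =
      extendedJacobian (fromBlocks Qq Qp Pq Pp) (of fun i _ => Sum.elim Qt Pt i)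
        (of fun _ j => Sum.elim Wq Wp j) (of fun _ _ => Wt) := by
  ext ((i | i) | (i | i)) ((j | j) | (j | j)) <;> simp [extendedJacobian, one_apply]

theorem jacobian_symplectic_iff_general (n : ℕ)
    (Qq Qp Pq Pp : Matrix (Fin n) (Fin n) ℝ)
    (Qt Pt : Fin n → ℝ) (Wq Wp : Fin n → ℝ) (Wt : ℝ)
    (Z : Matrix ((Fin n ⊕ Fin 1) ⊕ (Fin n ⊕ Fin 1))
      ((Fin n ⊕ Fin 1) ⊕ (Fin n ⊕ Fin 1)) ℝ)
    (hZ : Z = Matrix.fromBlocks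
      (Matrix.fromBlocks Qq (Matrix.of fun i _ => Qt i) 0 1)
      (Matrix.fromBlocks Qp 0 0 0)
      (Matrix.fromBlocks Pq (Matrix.of fun i _ => Pt i) (Matrix.of fun _ j => Wq j)
        (Matrix.of fun _ _ => Wt))
      (Matrix.fromBlocks Pp 0 (Matrix.of fun _ j => Wp j) 1))
    (Yy : Matrix (Fin n ⊕ Fin n) (Fin n ⊕ Fin n) ℝ)
    (hYy : Yy = Matrix.fromBlocks Qq Qp Pq Pp)
    (Yt : Matrix (Fin n ⊕ Fin n) (Fin 1) ℝ)
    (hYt : Yt = Matrix.of fun i _ => Sum.elim Qt Pt i) :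
    Zᵀ * Jext n * Z = Jext n ↔
      (Yyᵀ * Jmat n * Yy = Jmat n ∧
        (Matrix.of fun _ j => Sum.elim Wq Wp j) = -(Ytᵀ * Jmat n * Yy)) := by
  subst hZ hYy hYt
  rw [← (reindex (Equiv.sumSumSumComm _ _ _ _) (Equiv.sumSumSumComm _ _ _ _)).injective.eq_iff,
    ← reindex_transpose_mul_mul, reindex_jacobian, reindex_Jext]
  exact extendedJacobian_symplectic_iff_of_subsingleton _ _ _ _ (Jmat_transpose n)

/-- The Jacobian block matrix `Z_z = [[Q_q, Q_t, Q_p, 0],[0,1,0,0],[P_q, P_t, P_p, 0],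
[W_q, W_t, W_p, 1]]` satisfies `Z_zᵀ J̃ Z_z = J̃` if and only if `Y_yᵀ Jₙ Y_y = Jₙ` and
`[W_q W_p] = -Y_tᵀ Jₙ Y_y`, where `Y_y = [[Q_q, Q_p],[P_q, P_p]]` and `Y_t = [Q_t; P_t]`. -/
theorem jacobian_symplectic_iff (n : ℕ) (hn : 1 ≤ n)
    (Qq Qp Pq Pp : Matrix (Fin n) (Fin n) ℝ)
    (Qt Pt : Fin n → ℝ) (Wq Wp : Fin n → ℝ) (Wt : ℝ)
    (Z : Matrix ((Fin n ⊕ Fin 1) ⊕ (Fin n ⊕ Fin 1))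
      ((Fin n ⊕ Fin 1) ⊕ (Fin n ⊕ Fin 1)) ℝ)
    (hZ : Z = Matrix.fromBlocks
      (Matrix.fromBlocks Qq (Matrix.of fun i _ => Qt i) 0 1)
      (Matrix.fromBlocks Qp 0 0 0)
      (Matrix.fromBlocks Pq (Matrix.of fun i _ => Pt i) (Matrix.of fun _ j => Wq j)
        (Matrix.of fun _ _ => Wt))
      (Matrix.fromBlocks Pp 0 (Matrix.of fun _ j => Wp j) 1))
    (Yy : Matrix (Fin n ⊕ Fin n) (Fin n ⊕ Fin n) ℝ)
    (hYy : Yy = Matrix.fromBlocks Qq Qp Pq Pp)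
    (Yt : Matrix (Fin n ⊕ Fin n) (Fin 1) ℝ)
    (hYt : Yt = Matrix.of fun i _ => Sum.elim Qt Pt i) :
    Zᵀ * Jext n * Z = Jext n ↔
      (Yyᵀ * Jmat n * Yy = Jmat n ∧
        (Matrix.of fun _ j => Sum.elim Wq Wp j) = -(Ytᵀ * Jmat n * Yy)) :=
  jacobian_symplectic_iff_general n Qq Qp Pq Pp Qt Pt Wq Wp Wt Z hZ Yy hYy Yt hYt
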